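/- arXiv:1808.09007 — 9 statements merged into one kernel-verified Lean document; each statement's English description precedes it below -/
import Mathlib

section
/- Let L be a full-rank lattice in R^2 with Minkowski reduced basis v1, v2 (so ||v1|| = λ1 and ||v2|| = λ2 are the successive minima of L). Define u1 = λ2·v1 and u2 = λ1·v2. Then the lattice M spanned by u1 and u2 is well-rounded with both successive minima equal to λ1·λ2. -/
noncomputable section

/-- The planar lattice spanned over ℤ by `v1, v2` in Euclidean plane. -/
def lat (v1 v2 : EuclideanSpace ℝ (Fin 2)) : Set (EuclideanSpace ℝ (Fin 2)) :=
  {x | ∃ m n : ℤ, x = m • v1 + n • v2}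

/-- The `i`-th successive minimum of a set `L` in the Euclidean plane. -/
noncomputable def succMin (L : Set (EuclideanSpace ℝ (Fin 2))) (i : ℕ) : ℝ :=
  sInf {μ : ℝ | 0 ≤ μ ∧ i ≤ Module.finrank ℝ (Submodule.span ℝ {x ∈ L | ‖x‖ ≤ μ})}

/-!
Write `a = ‖v1‖`, `b = ‖v2‖`. Minimality of `v1, v2` forces the basis to be Minkowski reduced:
`a ≤ b`, and `2 |⟪v1, v2⟫| ≤ a b` because `v2 ± v1` are lattice vectors independent of `v1`, hence
no shorter than `v2`. The angle condition is invariant under rescaling each vector, so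
`b • v1, a • v2` is again a Minkowski reduced basis, now with both vectors of norm `a b`. The first
vector of a reduced basis `x, y` is a shortest nonzero lattice vector, since
`‖m x + n y‖² ≥ (|m| ‖x‖ - |n| ‖y‖)² + |m n| ‖x‖ ‖y‖`; so the stretched lattice has two
independent vectors of the minimal norm `a b`.
-/

open RealInnerProductSpace

section MinkowskiReduced

variable {F : Type*} [NormedAddCommGroup F] [InnerProductSpace ℝ F]

def MinkowskiReduced (x y : F) : Prop :=
  ‖x‖ ≤ ‖y‖ ∧ 2 * |⟪x, y⟫| ≤ ‖x‖ * ‖y‖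

theorem minkowskiReduced_of_norm_le_norm_add {x y : F} (hxy : ‖x‖ ≤ ‖y‖)
    (hadd : ‖y‖ ≤ ‖x + y‖) (hsub : ‖y‖ ≤ ‖y - x‖) : MinkowskiReduced x y := by
  have hadd' := pow_le_pow_left₀ (norm_nonneg y) hadd 2
  have hsub' := pow_le_pow_left₀ (norm_nonneg y) hsub 2
  rw [norm_add_sq_real] at hadd'
  rw [norm_sub_sq_real, real_inner_comm] at hsub'
  have hsq : ‖x‖ ^ 2 ≤ ‖x‖ * ‖y‖ := by
    rw [sq]; exact mul_le_mul_of_nonneg_left hxy (norm_nonneg x)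
  refine ⟨hxy, ?_⟩
  cases abs_cases ⟪x, y⟫ <;> linarith

theorem norm_smul_add_smul_sq (x y : F) (s t : ℝ) :
    ‖s • x + t • y‖ ^ 2 = s ^ 2 * ‖x‖ ^ 2 + 2 * s * t * ⟪x, y⟫ + t ^ 2 * ‖y‖ ^ 2 := by
  rw [norm_add_sq_real, norm_smul, norm_smul, real_inner_smul_left, real_inner_smul_right,
    mul_pow, mul_pow, Real.norm_eq_abs, Real.norm_eq_abs, sq_abs, sq_abs]
  ring

theorem MinkowskiReduced.norm_le_norm_intCast_smul_add_smul {x y : F} (h : MinkowskiReduced x y)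
    {m n : ℤ} (hmn : m ≠ 0 ∨ n ≠ 0) : ‖x‖ ≤ ‖(m : ℝ) • x + (n : ℝ) • y‖ := by
  obtain ⟨hxy, hinner⟩ := h
  have one_le_abs {k : ℤ} (hk : k ≠ 0) : 1 ≤ |(k : ℝ)| := by exact_mod_cast Int.one_le_abs hk
  rcases eq_or_ne m 0 with rfl | hm
  · have hn := one_le_abs (hmn.resolve_left (not_not.mpr rfl))
    rw [Int.cast_zero, zero_smul, zero_add, norm_smul, Real.norm_eq_abs]
    nlinarith [norm_nonneg y]
  rcases eq_or_ne n 0 with rfl | hn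
  · rw [Int.cast_zero, zero_smul, add_zero, norm_smul, Real.norm_eq_abs]
    nlinarith [one_le_abs hm, norm_nonneg x]
  set a := ‖x‖
  set b := ‖y‖
  set p := |(m : ℝ)|
  set q := |(n : ℝ)|
  have ha : 0 ≤ a := norm_nonneg x
  have hcross : -(p * q * (a * b)) ≤ 2 * m * n * ⟪x, y⟫ := by
    have := neg_abs_le (2 * m * n * ⟪x, y⟫)
    rw [abs_mul, abs_mul, abs_mul, abs_two] at this
    nlinarith [mul_nonneg (abs_nonneg (m : ℝ)) (abs_nonneg (n : ℝ))]
  -- `p²a² - pqab + q²b² = (pa - qb)² + pqab ≥ ab ≥ a²` since `p, q ≥ 1`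
  have hlower : a ^ 2 ≤ p ^ 2 * a ^ 2 - p * q * (a * b) + q ^ 2 * b ^ 2 := by
    nlinarith [sq_nonneg (p * a - q * b), mul_le_mul_of_nonneg_left hxy ha,
      mul_le_mul_of_nonneg_right (one_le_mul_of_one_le_of_one_le (one_le_abs hm) (one_le_abs hn))
        (mul_nonneg ha (ha.trans hxy))]
  have hnorm := norm_smul_add_smul_sq x y m n
  rw [← sq_abs (m : ℝ), ← sq_abs (n : ℝ)] at hnorm
  exact le_of_pow_le_pow_left₀ two_ne_zero (norm_nonneg _) (by linarith)

theorem minkowskiReduced_norm_smul_norm_smul {x y : F} (h : 2 * |⟪x, y⟫| ≤ ‖x‖ * ‖y‖) :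
    MinkowskiReduced (‖y‖ • x) (‖x‖ • y) := by
  rw [MinkowskiReduced, norm_smul, norm_smul, norm_norm, norm_norm, mul_comm ‖y‖,
    real_inner_smul_left, real_inner_smul_right, ← mul_assoc, mul_comm ‖y‖, abs_mul,
    abs_of_nonneg (by positivity)]
  refine ⟨le_rfl, ?_⟩
  nlinarith [mul_le_mul_of_nonneg_left h (by positivity : 0 ≤ ‖x‖ * ‖y‖)]

end MinkowskiReduced

section FinrankSpan

open Module Submodule

variable {K V : Type*} [Field K] [AddCommGroup V] [Module K V] [FiniteDimensional K V]
  {S : Set V} {x y : V}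

theorem one_le_finrank_span (hx : x ∈ S) (hx0 : x ≠ 0) : 1 ≤ finrank K (span K S) :=
  one_le_finrank_iff.mpr fun h => hx0 ((span_eq_bot.mp h) x hx)

theorem two_le_finrank_span (hx : x ∈ S) (hy : y ∈ S) (hxy : LinearIndependent K ![x, y]) :
    2 ≤ finrank K (span K S) := by
  have hle : span K (Set.range ![x, y]) ≤ span K S := by
    refine span_mono ?_
    rw [Matrix.range_cons, Matrix.range_cons, Matrix.range_empty, Set.union_empty]
    rintro z (rfl | rfl) <;> assumption
  simpa [finrank_span_eq_card hxy] using finrank_mono hle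

end FinrankSpan

section SuccessiveMinima

open Module Submodule

variable {L : Set (EuclideanSpace ℝ (Fin 2))} {x y : EuclideanSpace ℝ (Fin 2)}

theorem mem_lat (v1 v2 : EuclideanSpace ℝ (Fin 2)) (m n : ℤ) : m • v1 + n • v2 ∈ lat v1 v2 :=
  ⟨m, n, rfl⟩

theorem left_mem_lat (v1 v2 : EuclideanSpace ℝ (Fin 2)) : v1 ∈ lat v1 v2 :=
  ⟨1, 0, by rw [one_smul, zero_smul, add_zero]⟩

theorem right_mem_lat (v1 v2 : EuclideanSpace ℝ (Fin 2)) : v2 ∈ lat v1 v2 :=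
  ⟨0, 1, by rw [one_smul, zero_smul, zero_add]⟩

theorem succMin_le {i : ℕ} {μ : ℝ} (hμ : 0 ≤ μ)
    (h : i ≤ finrank ℝ (span ℝ {x ∈ L | ‖x‖ ≤ μ})) : succMin L i ≤ μ :=
  csInf_le ⟨0, fun _ hν => hν.1⟩ ⟨hμ, h⟩

theorem succMin_one_le_norm (hx : x ∈ L) (hx0 : x ≠ 0) : succMin L 1 ≤ ‖x‖ :=
  succMin_le (norm_nonneg x) (one_le_finrank_span ⟨hx, le_rfl⟩ hx0)

theorem succMin_two_le_max (hx : x ∈ L) (hy : y ∈ L) (hxy : LinearIndependent ℝ ![x, y]) :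
    succMin L 2 ≤ max ‖x‖ ‖y‖ :=
  succMin_le (le_max_of_le_left (norm_nonneg x))
    (two_le_finrank_span ⟨hx, le_max_left _ _⟩ ⟨hy, le_max_right _ _⟩ hxy)

theorem succMin_one_le_succMin_two (hx : x ∈ L) (hy : y ∈ L)
    (hxy : LinearIndependent ℝ ![x, y]) : succMin L 1 ≤ succMin L 2 := by
  refine csInf_le_csInf ⟨0, fun _ hμ => hμ.1⟩ ⟨max ‖x‖ ‖y‖, le_max_of_le_left (norm_nonneg x),
    two_le_finrank_span ⟨hx, le_max_left _ _⟩ ⟨hy, le_max_right _ _⟩ hxy⟩ ?_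
  exact fun μ ⟨hμ, h⟩ => ⟨hμ, one_le_two.trans h⟩

theorem le_succMin_one {r : ℝ} (hx : x ∈ L) (hx0 : x ≠ 0)
    (hr : ∀ z ∈ L, z ≠ 0 → r ≤ ‖z‖) : r ≤ succMin L 1 := by
  refine le_csInf ⟨‖x‖, norm_nonneg x, one_le_finrank_span ⟨hx, le_rfl⟩ hx0⟩ fun μ ⟨_, h⟩ => ?_
  by_contra! hμr
  have hbot : span ℝ {z ∈ L | ‖z‖ ≤ μ} = ⊥ :=
    span_eq_bot.mpr fun z ⟨hz, hzμ⟩ => by_contra fun hz0 => (hr z hz hz0).not_gt (hzμ.trans_lt hμr)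
  rw [hbot, finrank_bot] at h
  exact Nat.not_succ_le_zero 0 h

theorem succMin_eq_of_forall_le_norm {r : ℝ} (hx : x ∈ L) (hy : y ∈ L)
    (hxy : LinearIndependent ℝ ![x, y]) (hxr : ‖x‖ = r) (hyr : ‖y‖ = r)
    (hr : ∀ z ∈ L, z ≠ 0 → r ≤ ‖z‖) : succMin L 1 = r ∧ succMin L 2 = r := by
  have h1 : r ≤ succMin L 1 := le_succMin_one hx (hxy.ne_zero 0) hr
  have h12 := succMin_one_le_succMin_two hx hy hxy
  have h2 : succMin L 2 ≤ r := by simpa [hxr, hyr] using succMin_two_le_max hx hy hxy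
  exact ⟨by linarith, by linarith⟩

theorem norm_le_of_succMin {v1 v2 w : EuclideanSpace ℝ (Fin 2)}
    (h1 : ‖v1‖ = succMin L 1) (h2 : ‖v2‖ = succMin L 2) (hv1 : v1 ∈ L) (hw : w ∈ L)
    (hind : LinearIndependent ℝ ![v1, w]) : ‖v2‖ ≤ ‖w‖ := by
  have hv1w : ‖v1‖ ≤ ‖w‖ := h1 ▸ succMin_one_le_norm hw (hind.ne_zero 1)
  simpa [← h2, hv1w] using succMin_two_le_max hv1 hw hind

theorem minkowskiReduced_of_succMin {v1 v2 : EuclideanSpace ℝ (Fin 2)}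
    (hind : LinearIndependent ℝ ![v1, v2]) (h1 : ‖v1‖ = succMin (lat v1 v2) 1)
    (h2 : ‖v2‖ = succMin (lat v1 v2) 2) : MinkowskiReduced v1 v2 := by
  have hv1 := left_mem_lat v1 v2
  have hle (c : ℤ) : ‖v2‖ ≤ ‖c • v1 + v2‖ :=
    norm_le_of_succMin h1 h2 hv1 (by simpa using mem_lat v1 v2 c 1)
      ((LinearIndependent.pair_add_smul_right_iff c).mpr hind)
  refine minkowskiReduced_of_norm_le_norm_add ?_ (by simpa using hle 1) ?_
  · rw [h1, h2]
    exact succMin_one_le_succMin_two hv1 (right_mem_lat v1 v2) hind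
  · simpa [neg_add_eq_sub] using hle (-1)

theorem MinkowskiReduced.norm_le_of_mem_lat {v1 v2 z : EuclideanSpace ℝ (Fin 2)}
    (h : MinkowskiReduced v1 v2) (hz : z ∈ lat v1 v2) (hz0 : z ≠ 0) : ‖v1‖ ≤ ‖z‖ := by
  obtain ⟨m, n, rfl⟩ := hz
  have hmn : m ≠ 0 ∨ n ≠ 0 := by
    contrapose! hz0
    simp [hz0.1, hz0.2]
  simpa only [Int.cast_smul_eq_zsmul] using h.norm_le_norm_intCast_smul_add_smul hmn

end SuccessiveMinima

/-- Lemma WR_stretch: twisting a Minkowski reduced basis v1, v2 by the opposite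
successive minima yields a well-rounded lattice with successive minima λ1·λ2. -/
theorem stmt_0 (v1 v2 : EuclideanSpace ℝ (Fin 2))
    (hind : LinearIndependent ℝ ![v1, v2])
    (h1 : ‖v1‖ = succMin (lat v1 v2) 1)
    (h2 : ‖v2‖ = succMin (lat v1 v2) 2) :
    succMin (lat (‖v2‖ • v1) (‖v1‖ • v2)) 1 = ‖v1‖ * ‖v2‖ ∧
      succMin (lat (‖v2‖ • v1) (‖v1‖ • v2)) 2 = ‖v1‖ * ‖v2‖ := by
  have hv1 : ‖v1‖ ≠ 0 := norm_ne_zero_iff.mpr (hind.ne_zero 0)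
  have hv2 : ‖v2‖ ≠ 0 := norm_ne_zero_iff.mpr (hind.ne_zero 1)
  have hred := minkowskiReduced_norm_smul_norm_smul (minkowskiReduced_of_succMin hind h1 h2).2
  have hnorm1 : ‖‖v2‖ • v1‖ = ‖v1‖ * ‖v2‖ := by rw [norm_smul, norm_norm, mul_comm]
  have hnorm2 : ‖‖v1‖ • v2‖ = ‖v1‖ * ‖v2‖ := by rw [norm_smul, norm_norm]
  refine succMin_eq_of_forall_le_norm (left_mem_lat _ _) (right_mem_lat _ _)
    ((LinearIndependent.pair_smul_smul_iff hv2.isUnit hv1.isUnit).mpr hind) hnorm1 hnorm2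
    fun z hz hz0 => ?_
  exact hnorm1 ▸ hred.norm_le_of_mem_lat hz hz0
end
end

section
/- Let D > 1 be a squarefree integer with D ≢ 1 (mod 4), and let a, b, g be nonnegative integers with b < a, g | a, g | b, and ag | (b^2 − g^2·D). Suppose there exist positive rationals p, q with p > q√D (so α = p + q√D is totally positive) such that a^2·p = (D·g^2 + b^2)·p − 2·q·b·g·D and |b^2 − g^2·D + a^2| ≤ a·b. Then b^2 < g^2·D. -/
/-- For D ≢ 1 mod 4 squarefree, the WR-twistability conditions on the canonical
basis a, b − g√D force b² < g²D. -/
theorem stmt_3 (D : ℕ) (hD : Squarefree D) (hD1 : 1 < D) (hD4 : D % 4 ≠ 1)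
    (a b g : ℕ) (hba : b < a) (hga : g ∣ a) (hgb : g ∣ b)
    (hdvd : (a * g : ℤ) ∣ ((b : ℤ) ^ 2 - (g : ℤ) ^ 2 * D))
    (p q : ℚ) (hp : 0 < p) (hq : 0 < q)
    (htp : (q : ℝ) * Real.sqrt D < (p : ℝ))
    (heq : (a : ℚ) ^ 2 * p = ((D : ℚ) * g ^ 2 + b ^ 2) * p - 2 * q * b * g * D)
    (hineq : |(b : ℤ) ^ 2 - (g : ℤ) ^ 2 * D + (a : ℤ) ^ 2| ≤ (a : ℤ) * b) :
    (b : ℤ) ^ 2 < (g : ℤ) ^ 2 * D := by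
  have h1 := (abs_le.mp hineq).2
  have hba' : (b : ℤ) < a := by exact_mod_cast hba
  have ha : (0 : ℤ) < a := lt_of_le_of_lt (by positivity) hba'
  nlinarith [mul_lt_mul_of_pos_left hba' ha]
end

section
/- Let D > 1 be a squarefree integer with D ≡ 1 (mod 4), and let a, b, g be nonnegative integers with b < a, g | a, g | b, and 4ag | ((2b+g)^2 − g^2·D). Suppose there exist positive rationals p, q with p > q√D such that 2a^2·p = (1/2)((D+1)p − 2Dq)g^2 − 2b(Dq − p)g + 2b^2·p and |4a^2 + 4b^2 + 4bg − (D−1)g^2| ≤ 2a(2b + g). Then 4(b^2 + bg) < (D−1)g^2, i.e., b < g(√D − 1)/2. -/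
/-- A squarefree number `> 1` times a square is never a square of the shape `u ^ 2 = D * g ^ 2`. -/
lemma aux_sq (D u g : ℕ) (hD : Squarefree D) (hD1 : 1 < D) (hg : 0 < g) :
    u ^ 2 ≠ D * g ^ 2 := by
  intro h
  obtain ⟨P, hP, hPD⟩ := Nat.exists_prime_and_dvd (n := D) (by omega)
  have hu : u ≠ 0 := by
    rintro rfl
    simp at h
    rcases h with h | h <;> omega
  have hD0 : D ≠ 0 := by omega
  have hfu := Nat.factorization_pow u 2
  have h1 : (u ^ 2).factorization P = 2 * u.factorization P := by
    rw [Nat.factorization_pow]; rfl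
  have h2 : (D * g ^ 2).factorization P
      = D.factorization P + 2 * g.factorization P := by
    rw [Nat.factorization_mul hD0 (by positivity), Nat.factorization_pow]; rfl
  have hle : D.factorization P ≤ 1 := (Nat.squarefree_iff_factorization_le_one hD0).mp hD P
  have hge : 1 ≤ D.factorization P :=
    (Nat.Prime.factorization_pos_of_dvd hP hD0 hPD)
  have := h ▸ h1
  omega

/-- For D ≡ 1 mod 4 squarefree, the WR-twistability conditions on the canonical
basis a, b + g(1−√D)/2 force 4(b² + bg) < (D−1)g², i.e. b < g(√D − 1)/2. -/
theorem stmt_4 (D : ℕ) (hD : Squarefree D) (hD1 : 1 < D) (hD4 : D % 4 = 1)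
    (a b g : ℕ) (hba : b < a) (hga : g ∣ a) (hgb : g ∣ b)
    (hdvd : (4 * a * g : ℤ) ∣ ((2 * b + g : ℤ) ^ 2 - (g : ℤ) ^ 2 * D))
    (p q : ℚ) (hp : 0 < p) (hq : 0 < q)
    (htp : (q : ℝ) * Real.sqrt D < (p : ℝ))
    (heq : 2 * (a : ℚ) ^ 2 * p =
        (1 / 2) * (((D : ℚ) + 1) * p - 2 * D * q) * g ^ 2 -
          2 * b * ((D : ℚ) * q - p) * g + 2 * (b : ℚ) ^ 2 * p)
    (hineq : |4 * (a : ℤ) ^ 2 + 4 * (b : ℤ) ^ 2 + 4 * (b : ℤ) * g - ((D : ℤ) - 1) * (g : ℤ) ^ 2| ≤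
        2 * (a : ℤ) * (2 * (b : ℤ) + g)) :
    4 * ((b : ℤ) ^ 2 + (b : ℤ) * g) < ((D : ℤ) - 1) * (g : ℤ) ^ 2 ∧
      (b : ℝ) < g * (Real.sqrt D - 1) / 2 := by
  have ha : 0 < a := lt_of_le_of_lt (Nat.zero_le b) hba
  have hg : 0 < g := by
    rcases Nat.eq_zero_or_pos g with h | h
    · subst h; simp at hga; omega
    · exact h
  set N : ℤ := (2 * b + g : ℤ) ^ 2 - (g : ℤ) ^ 2 * D with hN
  -- N ≠ 0
  have hNne : N ≠ 0 := by
    intro h0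
    have : ((2 * b + g) ^ 2 : ℤ) = (D * g ^ 2 : ℕ) := by push_cast; linarith [sub_eq_zero.mp h0]
    have : ((2 * b + g) ^ 2 : ℕ) = D * g ^ 2 := by exact_mod_cast (by push_cast at this ⊢; linarith)
    exact aux_sq D (2 * b + g) g hD hD1 hg this
  -- upper bound from hineq
  have hXle : (4 : ℤ) * a ^ 2 + N ≤ 2 * a * (2 * b + g) := by
    have h1 : 4 * (a : ℤ) ^ 2 + 4 * (b : ℤ) ^ 2 + 4 * (b : ℤ) * g - ((D : ℤ) - 1) * (g : ℤ) ^ 2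
        = 4 * a ^ 2 + N := by ring
    calc (4 : ℤ) * a ^ 2 + N ≤ |4 * (a : ℤ) ^ 2 + 4 * (b : ℤ) ^ 2 + 4 * (b : ℤ) * g -
          ((D : ℤ) - 1) * (g : ℤ) ^ 2| := by rw [h1]; exact le_abs_self _
      _ ≤ _ := hineq
  -- N < 0
  have hNneg : N < 0 := by
    rcases lt_trichotomy N 0 with h | h | h
    · exact h
    · exact absurd h hNne
    · exfalso
      have hge : (4 : ℤ) * a * g ≤ N := Int.le_of_dvd h hdvd
      have hb : (b : ℤ) < a := by exact_mod_cast hba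
      have hgz : (0 : ℤ) < g := by exact_mod_cast hg
      have haz : (0 : ℤ) < a := by exact_mod_cast ha
      nlinarith [hXle, hge]
  have key : 4 * ((b : ℤ) ^ 2 + (b : ℤ) * g) < ((D : ℤ) - 1) * (g : ℤ) ^ 2 := by
    have : (2 * (b : ℤ) + g) ^ 2 < (g : ℤ) ^ 2 * D := by linarith [hNneg]
    nlinarith [this]
  refine ⟨key, ?_⟩
  have hlt : ((2 * b + g : ℝ)) ^ 2 < (Real.sqrt D * g) ^ 2 := by
    have hsq : Real.sqrt D ^ 2 = (D : ℝ) := Real.sq_sqrt (by positivity)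
    have : ((2 * (b : ℤ) + g) ^ 2 : ℝ) < ((g : ℤ) ^ 2 * D : ℝ) := by
      exact_mod_cast (by linarith [hNneg] : (2 * (b : ℤ) + g) ^ 2 < (g : ℤ) ^ 2 * D)
    push_cast at this
    calc ((2 * b + g : ℝ)) ^ 2 < (g : ℝ) ^ 2 * D := by push_cast; linarith
      _ = (Real.sqrt D * g) ^ 2 := by rw [mul_pow, hsq]; ring
  have h2 : (2 * b + g : ℝ) < Real.sqrt D * g := by
    refine lt_of_pow_lt_pow_left₀ 2 (by positivity) hlt
  have : (0:ℝ) ≤ g := by positivity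
  nlinarith [h2]
end

section
/- Let D ≡ 1 (mod 4) be a squarefree integer with D > 5. Then 2D/(D − 3) < √D; consequently there is no totally positive element α = q(2D/(D−3) + √D) with q > 0 in Q(√D), and the canonical basis of the ring of integers of Q(√D) is not well-rounded twistable for D > 5. -/
/-- For D ≡ 1 mod 4 squarefree with D > 5 we have 2D/(D−3) < √D; hence there is
no totally positive element α = q(2D/(D−3) + √D) with q > 0, so the canonical
basis of the ring of integers of Q(√D) is not well-rounded twistable. -/
theorem stmt_6 (D : ℕ) (hD : Squarefree D) (hD4 : D % 4 = 1) (hD5 : 5 < D) :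
    2 * (D : ℝ) / ((D : ℝ) - 3) < Real.sqrt D ∧
      ∀ q : ℝ, 0 < q →
        ¬(0 < q * (2 * (D : ℝ) / ((D : ℝ) - 3) + Real.sqrt D) ∧
          0 < q * (2 * (D : ℝ) / ((D : ℝ) - 3) - Real.sqrt D)) := by
  have hne9 : D ≠ 9 := by
    rintro rfl
    exact absurd hD (by simp [Nat.squarefree_iff_prime_squarefree]; exact ⟨3, by norm_num, by norm_num⟩)
  have h13 : 13 ≤ D := by omega
  have hx : (13 : ℝ) ≤ (D : ℝ) := by exact_mod_cast h13
  set x : ℝ := (D : ℝ) with hxdef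
  have hx3 : (0 : ℝ) < x - 3 := by linarith
  have hnn : 0 ≤ 2 * x / (x - 3) := by positivity
  have hmain : 2 * x / (x - 3) < Real.sqrt x := by
    rw [Real.lt_sqrt hnn, div_pow, div_lt_iff₀ (by positivity)]
    nlinarith [sq_nonneg (x - 13)]
  refine ⟨hmain, fun q hq ⟨_, h2⟩ => ?_⟩
  nlinarith [mul_pos hq (sub_pos.mpr hmain)]
end

section
/- Let K = Q(√5) and α = 5 + √5. Then the matrix C with columns c1 = (√(5+√5), √(5−√5)) and c2 = ((1−√5)/2·√(5+√5), (1+√5)/2·√(5−√5)) has orthogonal columns of equal norm: c1·c2 = 0 and ||c1||^2 = ||c2||^2 = 10. In particular, the lattice C·Z^2 is well-rounded. -/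
noncomputable section

/-! With `s = √5`, `a = √(5 + s)` and `b = √(5 - s)`, the three claimed identities are polynomial
consequences of `a² = 5 + s`, `b² = 5 - s` and `s² = 5`. Orthogonality and equal length of the
two columns give `‖m c₁ + n c₂‖² = 10 (m² + n²)`, so both columns are shortest nonzero lattice
vectors; being independent, they already span the plane at the first minimum. -/

section InnerProductSpace

variable {E : Type*} [NormedAddCommGroup E] [InnerProductSpace ℝ E]

theorem norm_zsmul_add_zsmul_sq_of_inner_eq_zero {u v : E} (h : inner ℝ u v = 0) (m n : ℤ) :
    ‖m • u + n • v‖ ^ 2 = (m : ℝ) ^ 2 * ‖u‖ ^ 2 + (n : ℝ) ^ 2 * ‖v‖ ^ 2 := by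
  rw [← Int.cast_smul_eq_zsmul ℝ m u, ← Int.cast_smul_eq_zsmul ℝ n v, norm_add_sq_real,
    real_inner_smul_left, real_inner_smul_right, h, norm_smul, norm_smul, mul_pow, mul_pow,
    Real.norm_eq_abs, Real.norm_eq_abs, sq_abs, sq_abs]
  ring

theorem norm_le_norm_zsmul_add_zsmul_of_inner_eq_zero {u v : E} (h : inner ℝ u v = 0)
    (huv : ‖u‖ = ‖v‖) {m n : ℤ} (hne : m • u + n • v ≠ 0) : ‖u‖ ≤ ‖m • u + n • v‖ := by
  have hmn : m ≠ 0 ∨ n ≠ 0 := by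
    by_contra! h0
    obtain ⟨rfl, rfl⟩ := h0
    simp at hne
  have hpos : (0 : ℤ) < m ^ 2 + n ^ 2 := by rcases hmn with hm | hn <;> positivity
  have hone : (1 : ℝ) ≤ (m : ℝ) ^ 2 + (n : ℝ) ^ 2 := by exact_mod_cast hpos
  rw [← pow_le_pow_iff_left₀ (norm_nonneg _) (norm_nonneg _) two_ne_zero,
    norm_zsmul_add_zsmul_sq_of_inner_eq_zero h, ← huv]
  nlinarith [sq_nonneg ‖u‖]

theorem linearIndependent_pair_of_inner_eq_zero {u v : E} (h : inner ℝ u v = 0) (hu : u ≠ 0)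
    (hv : v ≠ 0) : LinearIndependent ℝ ![u, v] := by
  refine linearIndependent_of_ne_zero_of_inner_eq_zero (Fin.forall_fin_two.2 ⟨hu, hv⟩) ?_
  intro i j hij
  fin_cases i <;> fin_cases j
  · exact absurd rfl hij
  · exact h
  · simpa [real_inner_comm] using h
  · exact absurd rfl hij

end InnerProductSpace

theorem exists_ne_zero_of_one_le_finrank_span {K V : Type*} [DivisionRing K] [AddCommGroup V]
    [Module K V] {s : Set V} (h : 1 ≤ Module.finrank K (Submodule.span K s)) :
    ∃ x ∈ s, x ≠ 0 := by
  by_contra! hs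
  rw [Submodule.span_eq_bot.2 hs, finrank_bot] at h
  omega

theorem succMin_one_eq_succMin_two {L : Set (EuclideanSpace ℝ (Fin 2))}
    {v₁ v₂ : EuclideanSpace ℝ (Fin 2)} (hv₁ : v₁ ∈ L) (hv₂ : v₂ ∈ L)
    (hind : LinearIndependent ℝ ![v₁, v₂]) (hmin : ∀ x ∈ L, x ≠ 0 → ‖v₁‖ ≤ ‖x‖ ∧ ‖v₂‖ ≤ ‖x‖) :
    succMin L 1 = succMin L 2 := by
  unfold succMin
  congr 1
  ext μ
  simp only [Set.mem_ofPred_eq, and_congr_right_iff]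
  intro _
  refine ⟨fun h1 => ?_, fun h2 => one_le_two.trans h2⟩
  obtain ⟨x, ⟨hxL, hxμ⟩, hx⟩ := exists_ne_zero_of_one_le_finrank_span h1
  have hspan : Set.range ![v₁, v₂] ⊆ {x ∈ L | ‖x‖ ≤ μ} := by
    rw [Matrix.range_cons, Matrix.range_cons, Matrix.range_empty, Set.union_empty]
    rintro y (rfl | rfl)
    · exact ⟨hv₁, (hmin x hxL hx).1.trans hxμ⟩
    · exact ⟨hv₂, (hmin x hxL hx).2.trans hxμ⟩
  calc 2 = Module.finrank ℝ (Submodule.span ℝ (Set.range ![v₁, v₂])) := by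
        rw [finrank_span_eq_card hind, Fintype.card_fin]
    _ ≤ _ := Submodule.finrank_mono (Submodule.span_mono hspan)

theorem succMin_lat_one_eq_succMin_two_of_inner_eq_zero {v₁ v₂ : EuclideanSpace ℝ (Fin 2)}
    (h : inner ℝ v₁ v₂ = 0) (hnorm : ‖v₁‖ = ‖v₂‖) (hv₁ : v₁ ≠ 0) :
    succMin (lat v₁ v₂) 1 = succMin (lat v₁ v₂) 2 := by
  have hv₂ : v₂ ≠ 0 := norm_ne_zero_iff.1 (hnorm ▸ norm_ne_zero_iff.2 hv₁)
  refine succMin_one_eq_succMin_two ⟨1, 0, by simp⟩ ⟨0, 1, by simp⟩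
    (linearIndependent_pair_of_inner_eq_zero h hv₁ hv₂) ?_
  rintro x ⟨m, n, rfl⟩ hx
  have hle := norm_le_norm_zsmul_add_zsmul_of_inner_eq_zero h hnorm hx
  exact ⟨hle, hnorm ▸ hle⟩

theorem inner_equiv_symm_pair (a b c d : ℝ) :
    inner ℝ ((WithLp.equiv 2 (Fin 2 → ℝ)).symm ![a, b]) ((WithLp.equiv 2 (Fin 2 → ℝ)).symm ![c, d])
      = a * c + b * d := by
  simp [PiLp.inner_apply, Fin.sum_univ_two, mul_comm]

/-- The twist of the canonical basis of the ring of integers of Q(√5) by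
α = 5 + √5 has orthogonal columns of equal norm 10; in particular the resulting
lattice is well-rounded. -/
theorem stmt_7 :
    let c1 : EuclideanSpace ℝ (Fin 2) := (WithLp.equiv 2 (Fin 2 → ℝ)).symm
      ![Real.sqrt (5 + Real.sqrt 5), Real.sqrt (5 - Real.sqrt 5)]
    let c2 : EuclideanSpace ℝ (Fin 2) := (WithLp.equiv 2 (Fin 2 → ℝ)).symm
      ![(1 - Real.sqrt 5) / 2 * Real.sqrt (5 + Real.sqrt 5),
        (1 + Real.sqrt 5) / 2 * Real.sqrt (5 - Real.sqrt 5)]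
    (inner ℝ c1 c2 : ℝ) = 0 ∧ ‖c1‖ ^ 2 = 10 ∧ ‖c2‖ ^ 2 = 10 ∧
      succMin (lat c1 c2) 1 = succMin (lat c1 c2) 2 := by
  intro c1 c2
  set s := Real.sqrt 5
  have hs : s ^ 2 = 5 := Real.sq_sqrt (by norm_num)
  have hs_le : s ≤ 5 := by nlinarith [Real.sqrt_nonneg 5]
  have ha : Real.sqrt (5 + s) ^ 2 = 5 + s := Real.sq_sqrt (by linarith [Real.sqrt_nonneg 5])
  have hb : Real.sqrt (5 - s) ^ 2 = 5 - s := Real.sq_sqrt (by linarith)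
  have h12 : inner ℝ c1 c2 = 0 := by
    rw [inner_equiv_symm_pair]
    linear_combination (1 - s) / 2 * ha + (1 + s) / 2 * hb - hs
  have h1 : ‖c1‖ ^ 2 = 10 := by
    rw [← real_inner_self_eq_norm_sq, inner_equiv_symm_pair]
    linear_combination ha + hb
  have h2 : ‖c2‖ ^ 2 = 10 := by
    rw [← real_inner_self_eq_norm_sq, inner_equiv_symm_pair]
    linear_combination ((1 - s) / 2) ^ 2 * ha + ((1 + s) / 2) ^ 2 * hb + 3 / 2 * hs
  have hnorm : ‖c1‖ = ‖c2‖ := (sq_eq_sq₀ (norm_nonneg _) (norm_nonneg _)).1 (h1.trans h2.symm)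
  have hc1 : c1 ≠ 0 := fun h0 => by norm_num [h0] at h1
  exact ⟨h12, h1, h2, succMin_lat_one_eq_succMin_two_of_inner_eq_zero h12 hnorm hc1⟩
end
end

section
/- Let D > 1 be a squarefree integer with D ≢ 1 (mod 4). There are no positive reals p, q satisfying simultaneously D(p^2 − 4Dq^2) ≥ 0 and p ≥ √(D(p^2 − Dq^2)). Consequently, the canonical basis {1, −√D} of Z[√D] is not stable twistable. -/
/-- For D ≢ 1 mod 4 squarefree, no positive reals p, q satisfy both stability
conditions for the canonical basis of Z[√D]: the canonical basis of the ring of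
integers is not stable twistable. -/
theorem stmt_9 (D : ℕ) (hD : Squarefree D) (hD1 : 1 < D) (hD4 : D % 4 ≠ 1) :
    ¬∃ p q : ℝ, 0 < p ∧ 0 < q ∧
      0 ≤ (D : ℝ) * (p ^ 2 - 4 * D * q ^ 2) ∧
      Real.sqrt ((D : ℝ) * (p ^ 2 - D * q ^ 2)) ≤ p := by
  rintro ⟨p, q, hp, hq, h1, h2⟩
  have hDR : (1 : ℝ) < D := by exact_mod_cast hD1
  have hD0 : (0 : ℝ) < D := by linarith
  have hA : p ^ 2 - 4 * D * q ^ 2 ≥ 0 := nonneg_of_mul_nonneg_right h1 hD0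
  have hnn : (0 : ℝ) ≤ (D : ℝ) * (p ^ 2 - D * q ^ 2) := by nlinarith
  have hsq := Real.sq_sqrt hnn
  have h3 : (D : ℝ) * (p ^ 2 - D * q ^ 2) ≤ p ^ 2 := by
    nlinarith [Real.sqrt_nonneg ((D : ℝ) * (p ^ 2 - D * q ^ 2))]
  have h4 : ((D : ℝ) - 1) * p ^ 2 ≤ (D : ℝ) ^ 2 * q ^ 2 := by nlinarith
  have h5 : ((D : ℝ) - 1) * (4 * D * q ^ 2) ≤ ((D : ℝ) - 1) * p ^ 2 := by nlinarith
  have hDR2 : (2 : ℝ) ≤ D := by exact_mod_cast hD1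
  nlinarith [mul_pos (mul_pos hD0 hq) hq, sq_nonneg q]
end

section
/- Let D ≡ 1 (mod 4) be squarefree with D > 5. Then (D√(4D−3) − 3)/(D − 3) ≥ D/√(D − 4). Consequently there are no positive reals p, q with q·(D√(4D−3) − 3)/(D − 3) < p < q·D/√(D−4), and the canonical basis of the ring of integers of Q(√D) is not stable twistable for D > 5. -/
/-- For D ≡ 1 mod 4 squarefree with D > 5, (D√(4D−3) − 3)/(D−3) ≥ D/√(D−4), so
no positive reals p, q satisfy the stable-twistability window for the canonical
basis of the ring of integers of Q(√D). -/
theorem stmt_10 (D : ℕ) (hD : Squarefree D) (hD4 : D % 4 = 1) (hD5 : 5 < D) :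
    ((D : ℝ) * Real.sqrt (4 * D - 3) - 3) / ((D : ℝ) - 3) ≥
        (D : ℝ) / Real.sqrt ((D : ℝ) - 4) ∧
      ¬∃ p q : ℝ, 0 < p ∧ 0 < q ∧
        q * (((D : ℝ) * Real.sqrt (4 * D - 3) - 3) / ((D : ℝ) - 3)) < p ∧
        p < q * ((D : ℝ) / Real.sqrt ((D : ℝ) - 4)) := by
  have hD9 : 9 ≤ D := by omega
  set d : ℝ := (D : ℝ) with hd
  have hd9 : (9 : ℝ) ≤ d := by rw [hd]; exact_mod_cast hD9
  set x : ℝ := Real.sqrt (4 * d - 3) with hxdef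
  set y : ℝ := Real.sqrt (d - 4) with hydef
  have hx0 : 0 ≤ x := Real.sqrt_nonneg _
  have hy0 : 0 < y := Real.sqrt_pos.mpr (by linarith)
  have hx2 : x ^ 2 = 4 * d - 3 := by
    rw [hxdef, Real.sq_sqrt (by linarith)]
  have hy2 : y ^ 2 = d - 4 := by
    rw [hydef, Real.sq_sqrt (by linarith)]
  have hyd : y ≤ d := by nlinarith
  set t : ℝ := x * y with htdef
  have ht0 : 0 ≤ t := mul_nonneg hx0 hy0.le
  have ht2 : t ^ 2 = (4 * d - 3) * (d - 4) := by
    rw [htdef, mul_pow, hx2, hy2]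
  have hA2B2 : (d * t) ^ 2 ≥ (d * (d - 3) + 3 * y) ^ 2 := by
    nlinarith [ht2, hy2, hyd, hd9, hy0.le]
  have hAB : d * t ≥ d * (d - 3) + 3 * y := by
    nlinarith [hA2B2, ht0, hy0.le, hd9]
  have hkey : y * (d * x - 3) ≥ d * (d - 3) := by
    have : y * (d * x - 3) = d * t - 3 * y := by rw [htdef]; ring
    linarith [this ▸ (by linarith [hAB] : d * t - 3 * y ≥ d * (d - 3))]
  have hmain : (d * x - 3) / (d - 3) ≥ d / y := by
    rw [ge_iff_le, div_le_div_iff₀ hy0 (by linarith : (0:ℝ) < d - 3)]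
    nlinarith [hkey]
  refine ⟨hmain, ?_⟩
  rintro ⟨p, q, hp, hq, h1, h2⟩
  have : q * (d / y) ≤ q * ((d * x - 3) / (d - 3)) :=
    mul_le_mul_of_nonneg_left hmain hq.le
  linarith
end

section
/- Let D ≡ 1 (mod 4) be a squarefree integer and suppose b, g are positive integers with b > (g/2)(2√(D/3) − 1). Then for all positive reals p, q, the inequality −D^2 g^2 q^2 + 3Dgbpq + (3/2)Dg^2 pq − 3b^2 p^2 − 3bgp^2 − (3/4)g^2 p^2 + (1/4)Dg^2 p^2 ≥ 0 fails. -/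
/-- For D ≡ 1 mod 4 squarefree and b > (g/2)(2√(D/3) − 1), the first
stable-twistability condition (Cd2) fails for all positive p, q. -/
theorem stmt_11 (D : ℕ) (hD : Squarefree D) (hD4 : D % 4 = 1)
    (b g : ℤ) (hb : 0 < b) (hg : 0 < g)
    (hbig : (b : ℝ) > ((g : ℝ) / 2) * (2 * Real.sqrt ((D : ℝ) / 3) - 1)) :
    ∀ p q : ℝ, 0 < p → 0 < q →
      ¬(0 ≤ -(D : ℝ) ^ 2 * g ^ 2 * q ^ 2 + 3 * D * g * b * p * q +
          (3 / 2) * (D : ℝ) * g ^ 2 * p * q - 3 * (b : ℝ) ^ 2 * p ^ 2 -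
          3 * (b : ℝ) * g * p ^ 2 - (3 / 4) * (g : ℝ) ^ 2 * p ^ 2 +
          (1 / 4) * (D : ℝ) * g ^ 2 * p ^ 2) := by
  have hDne : D ≠ 0 := by omega
  have hDpos : (0:ℝ) < (D:ℝ) := by exact_mod_cast Nat.pos_of_ne_zero hDne
  have hgR : (0:ℝ) < (g:ℝ) := by exact_mod_cast hg
  have hbR : (0:ℝ) < (b:ℝ) := by exact_mod_cast hb
  have hsqrt : Real.sqrt ((D:ℝ)/3) ^ 2 = (D:ℝ)/3 := Real.sq_sqrt (by positivity)
  have hsnn : 0 ≤ Real.sqrt ((D:ℝ)/3) := Real.sqrt_nonneg _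
  have hu : (b:ℝ) + (g:ℝ)/2 > (g:ℝ) * Real.sqrt ((D:ℝ)/3) := by nlinarith
  have key : 3 * ((b:ℝ) + (g:ℝ)/2) ^ 2 > (D:ℝ) * (g:ℝ) ^ 2 := by
    have h0 : (0:ℝ) ≤ (g:ℝ) * Real.sqrt ((D:ℝ)/3) := by positivity
    nlinarith [mul_self_nonneg ((g:ℝ) * Real.sqrt ((D:ℝ)/3))]
  intro p q hp hq h
  nlinarith [sq_nonneg (2*(D:ℝ)^2*(g:ℝ)^2*q - 3*(D:ℝ)*(g:ℝ)*((b:ℝ)+(g:ℝ)/2)*p),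
    mul_pos (mul_pos hp hp) (sub_pos.mpr key),
    mul_pos hDpos hDpos, mul_pos hgR hgR, sq_nonneg ((D:ℝ)*(g:ℝ)*p),
    mul_pos (mul_pos (mul_pos hDpos hDpos) (mul_pos hgR hgR)) (mul_pos (mul_pos hp hp) (sub_pos.mpr key))]
end

section
/- Let K = Q(√139) and I the ideal in Z[√139] with Z-basis {9, 7 − √139} (valid since 9 divides 7^2 − 139 = −90). Let α = 1946/107 + √139 and consider the vectors v1 = (9√(α1), 9√(α2)) and v2 = ((7 − √139)√(α1), (7 + √139)√(α2)), where α1 = 1946/107 + √139 and α2 = 1946/107 − √139. Then α is totally positive, ||v1||^2 = ||v2||^2 = 315252/107, and the cosine of the angle between v1 and v2 equals −1/14; in particular 2|v1·v2| ≤ ||v1||^2, so the lattice spanned by v1, v2 is well-rounded with Minkowski reduced basis v1, v2. -/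
/-!
The Gram matrix of `v1, v2` is computed by `⟪σ(β)√α, σ(γ)√α⟫ = Tr(αβγ)`: both norms are
`315252/107` and the inner product is `-22518/107`, i.e. `cos = -1/14`. For any basis `v, w` with
`‖v‖ = ‖w‖ = r` and `2|⟪v, w⟫| ≤ r²` the quadratic form satisfies
`‖m v + n w‖² ≥ r² (m² + n² - |m n|)`, and `m² + n² - |m n| ≥ 1` for integers not both zero,
so no nonzero lattice vector is shorter than `v` and both successive minima equal `r`.
-/

noncomputable section

theorem Int.one_le_sq_add_sq_sub_abs_mul (m n : ℤ) (h : m ≠ 0 ∨ n ≠ 0) :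
    1 ≤ m ^ 2 + n ^ 2 - |m * n| := by
  have hm : 0 ≤ |m| := abs_nonneg m
  have hn : 0 ≤ |n| := abs_nonneg n
  have hpos : 0 < |m| ∨ 0 < |n| := by simpa only [abs_pos] using h
  rw [abs_mul, ← sq_abs m, ← sq_abs n]
  rcases hpos with hp | hp <;> nlinarith [sq_nonneg (|m| - |n|), mul_nonneg hm hn]

section Reduced

variable {E : Type*} [NormedAddCommGroup E] [InnerProductSpace ℝ E] {v w : E}

theorem mul_sq_add_sq_sub_abs_mul_le_norm_sq (hn : ‖v‖ = ‖w‖) (hi : 2 * |inner ℝ v w| ≤ ‖v‖ ^ 2)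
    (a b : ℝ) : ‖v‖ ^ 2 * (a ^ 2 + b ^ 2 - |a * b|) ≤ ‖a • v + b • w‖ ^ 2 := by
  have hab : -(|a * b| * (2 * |inner ℝ v w|)) ≤ 2 * (a * b) * inner ℝ v w := by
    have := neg_abs_le (a * b * inner ℝ v w)
    rw [abs_mul] at this
    linarith
  rw [norm_add_sq_real, real_inner_smul_left, real_inner_smul_right, norm_smul, norm_smul,
    mul_pow, mul_pow, Real.norm_eq_abs, Real.norm_eq_abs, sq_abs, sq_abs, ← hn]
  nlinarith [mul_le_mul_of_nonneg_left hi (abs_nonneg (a * b))]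

theorem linearIndependent_pair_of_reduced (hv : v ≠ 0) (hn : ‖v‖ = ‖w‖)
    (hi : 2 * |inner ℝ v w| ≤ ‖v‖ ^ 2) : LinearIndependent ℝ ![v, w] := by
  refine LinearIndependent.pair_iff.2 fun a b hab => ?_
  have hbound := mul_sq_add_sq_sub_abs_mul_le_norm_sq hn hi a b
  rw [hab, norm_zero, zero_pow two_ne_zero] at hbound
  have hform : a ^ 2 + b ^ 2 - |a * b| ≤ 0 :=
    nonpos_of_mul_nonpos_right hbound (by positivity)
  have habs : |a * b| ≤ (a ^ 2 + b ^ 2) / 2 := by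
    rw [abs_mul]
    nlinarith [sq_nonneg (|a| - |b|), sq_abs a, sq_abs b]
  constructor <;> nlinarith [sq_nonneg a, sq_nonneg b]

end Reduced

section Plane

variable {v w : EuclideanSpace ℝ (Fin 2)}

theorem norm_le_of_mem_lat (hn : ‖v‖ = ‖w‖) (hi : 2 * |inner ℝ v w| ≤ ‖v‖ ^ 2)
    {x : EuclideanSpace ℝ (Fin 2)} (hx : x ∈ lat v w) (hx0 : x ≠ 0) : ‖v‖ ≤ ‖x‖ := by
  obtain ⟨m, n, rfl⟩ := hx
  have hmn : m ≠ 0 ∨ n ≠ 0 := by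
    by_contra! h
    simp [h.1, h.2] at hx0
  have hint : (1 : ℝ) ≤ (m : ℝ) ^ 2 + (n : ℝ) ^ 2 - |(m : ℝ) * n| := by
    exact_mod_cast Int.one_le_sq_add_sq_sub_abs_mul m n hmn
  have hbound := mul_sq_add_sq_sub_abs_mul_le_norm_sq hn hi m n
  simp only [Int.cast_smul_eq_zsmul] at hbound
  refine le_of_sq_le_sq ?_ (norm_nonneg _)
  nlinarith [sq_nonneg ‖v‖]

theorem succMin_eq_of_forall_le_norm_s12 {L : Set (EuclideanSpace ℝ (Fin 2))} {r : ℝ}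
    (hL : ∀ x ∈ L, x ≠ 0 → r ≤ ‖x‖) (hvw : LinearIndependent ℝ ![v, w]) (hv : v ∈ L)
    (hw : w ∈ L) (hvr : ‖v‖ ≤ r) (hwr : ‖w‖ ≤ r) {i : ℕ} (hi1 : 1 ≤ i) (hi2 : i ≤ 2) :
    succMin L i = r := by
  suffices {μ : ℝ | 0 ≤ μ ∧ i ≤ Module.finrank ℝ (Submodule.span ℝ {x ∈ L | ‖x‖ ≤ μ})} =
      Set.Ici r by rw [succMin, this, csInf_Ici]
  ext μ
  constructor
  · rintro ⟨-, hrank⟩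
    show r ≤ μ
    by_contra! hμ
    have hsub : {x ∈ L | ‖x‖ ≤ μ} ⊆ {0} := fun x ⟨hxL, hxμ⟩ =>
      by_contra fun hx0 => (hL x hxL hx0).not_gt (hxμ.trans_lt hμ)
    have hbot := Submodule.span_mono (R := ℝ) hsub
    rw [Submodule.span_singleton_eq_bot.2 rfl, le_bot_iff] at hbot
    rw [hbot, finrank_bot] at hrank
    omega
  · intro (hμ : r ≤ μ)
    refine ⟨(norm_nonneg v).trans (hvr.trans hμ), ?_⟩
    have htop : Submodule.span ℝ {x ∈ L | ‖x‖ ≤ μ} = ⊤ := by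
      refine top_unique ?_
      rw [← hvw.span_eq_top_of_card_eq_finrank (by simp), Matrix.range_cons, Matrix.range_cons,
        Matrix.range_empty, Set.union_empty]
      refine Submodule.span_mono ?_
      rintro x (rfl | rfl)
      exacts [⟨hv, hvr.trans hμ⟩, ⟨hw, hwr.trans hμ⟩]
    rw [htop, finrank_top, finrank_euclideanSpace_fin]
    exact hi2

theorem succMin_lat_eq_norm (hv : v ≠ 0) (hn : ‖v‖ = ‖w‖) (hi : 2 * |inner ℝ v w| ≤ ‖v‖ ^ 2)
    {i : ℕ} (hi1 : 1 ≤ i) (hi2 : i ≤ 2) : succMin (lat v w) i = ‖v‖ :=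
  succMin_eq_of_forall_le_norm_s12 (fun _ hx hx0 => norm_le_of_mem_lat hn hi hx hx0)
    (linearIndependent_pair_of_reduced hv hn hi) ⟨1, 0, by simp⟩ ⟨0, 1, by simp⟩ le_rfl hn.ge
    hi1 hi2

end Plane

theorem inner_twisted {p q : ℝ} (hp : 0 ≤ p) (hq : 0 ≤ q) (a b c d : ℝ) :
    inner ℝ ((WithLp.equiv 2 (Fin 2 → ℝ)).symm ![a * √p, b * √q])
      ((WithLp.equiv 2 (Fin 2 → ℝ)).symm ![c * √p, d * √q]) = a * c * p + b * d * q := by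
  simp only [PiLp.inner_apply, RCLike.inner_apply, conj_trivial, Fin.sum_univ_two,
    WithLp.equiv_symm_apply, Matrix.cons_val_zero, Matrix.cons_val_one]
  linear_combination a * c * Real.mul_self_sqrt hp + b * d * Real.mul_self_sqrt hq

/-- Example: the canonical basis {9, 7 − √139} of an ideal in Z[√139] is WR
twistable by α = 1946/107 + √139; the twisted basis has equal norms
315252/107, cosine −1/14, and yields a well-rounded lattice with Minkowski
reduced basis. -/
theorem stmt_12 :
    let α1 : ℝ := 1946 / 107 + Real.sqrt 139
    let α2 : ℝ := 1946 / 107 - Real.sqrt 139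
    let v1 : EuclideanSpace ℝ (Fin 2) := (WithLp.equiv 2 (Fin 2 → ℝ)).symm
      ![9 * Real.sqrt α1, 9 * Real.sqrt α2]
    let v2 : EuclideanSpace ℝ (Fin 2) := (WithLp.equiv 2 (Fin 2 → ℝ)).symm
      ![(7 - Real.sqrt 139) * Real.sqrt α1, (7 + Real.sqrt 139) * Real.sqrt α2]
    ((9 : ℤ) ∣ 7 ^ 2 - 139) ∧ 0 < α1 ∧ 0 < α2 ∧
      ‖v1‖ ^ 2 = 315252 / 107 ∧ ‖v2‖ ^ 2 = 315252 / 107 ∧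
      (inner ℝ v1 v2 : ℝ) / (‖v1‖ * ‖v2‖) = -(1 / 14) ∧
      2 * |(inner ℝ v1 v2 : ℝ)| ≤ ‖v1‖ ^ 2 ∧
      succMin (lat v1 v2) 1 = succMin (lat v1 v2) 2 := by
  intro α1 α2 v1 v2
  have h139 : √139 * √139 = 139 := Real.mul_self_sqrt (by norm_num)
  have hα1 : 0 < α1 := by positivity
  have hα2 : 0 < α2 := sub_pos.2 (by nlinarith [Real.sqrt_nonneg 139])
  have hv1 : ‖v1‖ ^ 2 = 315252 / 107 := by
    rw [← real_inner_self_eq_norm_sq, inner_twisted hα1.le hα2.le]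
    simp only [α1, α2]
    ring
  have hv2 : ‖v2‖ ^ 2 = 315252 / 107 := by
    rw [← real_inner_self_eq_norm_sq, inner_twisted hα1.le hα2.le]
    simp only [α1, α2]
    linear_combination (3892 / 107 - 28 : ℝ) * h139
  have hv12 : inner ℝ v1 v2 = -22518 / 107 := by
    rw [inner_twisted hα1.le hα2.le]
    simp only [α1, α2]
    linear_combination (-18 : ℝ) * h139
  have hn : ‖v1‖ = ‖v2‖ := (sq_eq_sq₀ (norm_nonneg _) (norm_nonneg _)).1 (hv1.trans hv2.symm)
  have hreduced : 2 * |inner ℝ v1 v2| ≤ ‖v1‖ ^ 2 := by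
    rw [hv12, hv1]
    norm_num [abs_of_neg]
  have hv1_ne : v1 ≠ 0 := by
    rw [← norm_ne_zero_iff, ← pow_ne_zero_iff two_ne_zero, hv1]
    norm_num
  refine ⟨⟨-10, by norm_num⟩, hα1, hα2, hv1, hv2, ?_, hreduced, ?_⟩
  · rw [← hn, ← sq, hv12, hv1]
    norm_num
  · rw [succMin_lat_eq_norm hv1_ne hn hreduced le_rfl one_le_two,
      succMin_lat_eq_norm hv1_ne hn hreduced one_le_two le_rfl]
end
end
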